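/- arXiv:1509.03618 — 6 statements merged into one kernel-verified Lean document; each statement's English description precedes it below -/
import Mathlib

section
/- There is no Kochen–Specker coloring of the symmetric idempotents of the matrix ring M₃(𝔽₅) over the field 𝔽₅ = ZMod 5, and the partial ring M₃(𝔽₅)_sym of symmetric 3×3 matrices over 𝔽₅ has no prime partial ideal. -/
open Matrix

/-- A Kochen–Specker coloring of the symmetric idempotents of `M₃(R)`. -/
def IsSymKSColoring {R : Type*} [CommRing R]
    (c : {P : Matrix (Fin 3) (Fin 3) R // Pᵀ = P ∧ P * P = P} → Bool) : Prop :=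
  ∀ (k : ℕ) (e : Fin k → {P : Matrix (Fin 3) (Fin 3) R // Pᵀ = P ∧ P * P = P}),
    (∀ i j : Fin k, i ≠ j →
      (e i : Matrix (Fin 3) (Fin 3) R) * (e j : Matrix (Fin 3) (Fin 3) R) = 0) →
    ((∀ i j : Fin k, c (e i) = true → c (e j) = true → i = j) ∧
      ((∑ i, (e i : Matrix (Fin 3) (Fin 3) R)) = 1 → ∃! i : Fin k, c (e i) = true))

/-- A prime partial ideal of the partial ring `M₃(R)_sym` of symmetric matrices: a subset
of the set of symmetric matrices such that for every commutative subring `C` of `M₃(R)`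
consisting of symmetric matrices, the corresponding subset of `C` is a prime ideal. -/
def IsSymPrimePartialIdeal {R : Type*} [CommRing R]
    (p : Set (Matrix (Fin 3) (Fin 3) R)) : Prop :=
  (∀ A ∈ p, Aᵀ = A) ∧
  ∀ C : Subring (Matrix (Fin 3) (Fin 3) R), (∀ x y : C, x * y = y * x) →
    (∀ x : C, (x : Matrix (Fin 3) (Fin 3) R)ᵀ = (x : Matrix (Fin 3) (Fin 3) R)) →
    ∃ I : Ideal C, I.IsPrime ∧ ∀ x : C, x ∈ I ↔ (x : Matrix (Fin 3) (Fin 3) R) ∈ p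

abbrev KSMat := Matrix (Fin 3) (Fin 3) (ZMod 5)
abbrev KSSI := {P : KSMat // Pᵀ = P ∧ P * P = P}

def ksM : Fin 20 → Matrix (Fin 3) (Fin 3) (ZMod 5) :=
  ![!![0, 0, 0; 0, 0, 0; 0, 0, 1],
    !![0, 0, 0; 0, 1, 0; 0, 0, 0],
    !![0, 0, 0; 0, 3, 3; 0, 3, 3],
    !![1, 0, 0; 0, 0, 0; 0, 0, 0],
    !![3, 0, 3; 0, 0, 0; 3, 0, 3],
    !![3, 0, 2; 0, 0, 0; 2, 0, 3],
    !![3, 3, 0; 3, 3, 0; 0, 0, 0],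
    !![2, 2, 2; 2, 2, 2; 2, 2, 2],
    !![1, 1, 2; 1, 1, 2; 2, 2, 4],
    !![1, 1, 3; 1, 1, 3; 3, 3, 4],
    !![2, 2, 3; 2, 2, 3; 3, 3, 2],
    !![1, 2, 1; 2, 4, 2; 1, 2, 1],
    !![4, 3, 3; 3, 1, 1; 3, 1, 1],
    !![4, 3, 2; 3, 1, 4; 2, 4, 1],
    !![1, 3, 1; 3, 4, 3; 1, 3, 1],
    !![4, 2, 3; 2, 1, 4; 3, 4, 1],
    !![1, 3, 4; 3, 4, 2; 4, 2, 1],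
    !![3, 2, 0; 2, 3, 0; 0, 0, 0],
    !![2, 3, 2; 3, 2, 3; 2, 3, 2],
    !![1, 4, 3; 4, 1, 2; 3, 2, 4]]

lemma ksM_symIdem : ∀ i, (ksM i)ᵀ = ksM i ∧ ksM i * ksM i = ksM i := by decide

def ksP (i : Fin 20) : KSSI := ⟨ksM i, ksM_symIdem i⟩

theorem core_unsat : ∀ b0 b1 b2 b3 b4 b5 b6 b7 b8 b9 b10 b11 b12 b13 b14 b15 b16 b17 b18 b19 : Bool,
    (b4 = true ∨ b10 = true ∨ b16 = true) →
    ¬(b4 = true ∧ b10 = true) →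
    ¬(b4 = true ∧ b16 = true) →
    ¬(b10 = true ∧ b16 = true) →
    (b8 = true ∨ b10 = true ∨ b17 = true) →
    ¬(b8 = true ∧ b10 = true) →
    ¬(b8 = true ∧ b17 = true) →
    ¬(b10 = true ∧ b17 = true) →
    (b0 = true ∨ b1 = true ∨ b3 = true) →
    ¬(b0 = true ∧ b1 = true) →
    ¬(b0 = true ∧ b3 = true) →
    ¬(b1 = true ∧ b3 = true) →
    (b7 = true ∨ b9 = true ∨ b17 = true) →
    ¬(b7 = true ∧ b9 = true) →
    ¬(b7 = true ∧ b17 = true) →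
    ¬(b9 = true ∧ b17 = true) →
    (b2 = true ∨ b10 = true ∨ b13 = true) →
    ¬(b2 = true ∧ b10 = true) →
    ¬(b2 = true ∧ b13 = true) →
    ¬(b10 = true ∧ b13 = true) →
    (b5 = true ∨ b7 = true ∨ b14 = true) →
    ¬(b5 = true ∧ b7 = true) →
    ¬(b5 = true ∧ b14 = true) →
    ¬(b7 = true ∧ b14 = true) →
    (b6 = true ∨ b18 = true ∨ b19 = true) →
    ¬(b6 = true ∧ b18 = true) →
    ¬(b6 = true ∧ b19 = true) →
    ¬(b18 = true ∧ b19 = true) →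
    (b2 = true ∨ b15 = true ∨ b18 = true) →
    ¬(b2 = true ∧ b15 = true) →
    ¬(b2 = true ∧ b18 = true) →
    ¬(b15 = true ∧ b18 = true) →
    (b5 = true ∨ b11 = true ∨ b18 = true) →
    ¬(b5 = true ∧ b11 = true) →
    ¬(b5 = true ∧ b18 = true) →
    ¬(b11 = true ∧ b18 = true) →
    (b12 = true ∨ b16 = true ∨ b19 = true) →
    ¬(b12 = true ∧ b16 = true) →
    ¬(b12 = true ∧ b19 = true) →
    ¬(b16 = true ∧ b19 = true) →
    (b1 = true ∨ b4 = true ∨ b5 = true) →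
    ¬(b1 = true ∧ b4 = true) →
    ¬(b1 = true ∧ b5 = true) →
    ¬(b4 = true ∧ b5 = true) →
    (b0 = true ∨ b6 = true ∨ b17 = true) →
    ¬(b0 = true ∧ b6 = true) →
    ¬(b0 = true ∧ b17 = true) →
    ¬(b6 = true ∧ b17 = true) →
    ¬(b8 = true ∧ b11 = true) →
    ¬(b13 = true ∧ b14 = true) →
    ¬(b2 = true ∧ b3 = true) →
    ¬(b9 = true ∧ b15 = true) →
    ¬(b7 = true ∧ b12 = true) → False := by
  intro b0 b1 b2 b3 b4 b5 b6 b7 b8 b9 b10 b11 b12 b13 b14 b15 b16 b17 b18 b19 ho0 hn0a hn0b hn0c ho1 hn1a hn1b hn1c ho2 hn2a hn2b hn2c ho3 hn3a hn3b hn3c ho4 hn4a hn4b hn4c ho5 hn5a hn5b hn5c ho6 hn6a hn6b hn6c ho7 hn7a hn7b hn7c ho8 hn8a hn8b hn8c ho9 hn9a hn9b hn9c ho10 hn10a hn10b hn10c ho11 hn11a hn11b hn11c he0 he1 he2 he3 he4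
  rcases ho0 with h|h|h <;> rcases ho1 with h'|h'|h' <;> rcases ho2 with h''|h''|h'' <;>
    simp_all

lemma ks_pair {c : KSSI → Bool} (hc : IsSymKSColoring c) (P Q : KSSI)
    (hPQ : (P : KSMat) * (Q : KSMat) = 0) (hQP : (Q : KSMat) * (P : KSMat) = 0) :
    ¬(c P = true ∧ c Q = true) := by
  rintro ⟨hP, hQ⟩
  have horth : ∀ i j : Fin 2, i ≠ j → (![P, Q] i : KSMat) * (![P, Q] j : KSMat) = 0 := by
    intro i j hij
    fin_cases i <;> fin_cases j <;> first | exact absurd rfl hij | assumption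
  have h := (hc 2 ![P, Q] horth).1 0 1 hP hQ
  exact absurd h (by decide)

lemma ks_basis {c : KSSI → Bool} (hc : IsSymKSColoring c) (P Q R : KSSI)
    (hPQ : (P : KSMat) * (Q : KSMat) = 0) (hQP : (Q : KSMat) * (P : KSMat) = 0)
    (hPR : (P : KSMat) * (R : KSMat) = 0) (hRP : (R : KSMat) * (P : KSMat) = 0)
    (hQR : (Q : KSMat) * (R : KSMat) = 0) (hRQ : (R : KSMat) * (Q : KSMat) = 0)
    (hsum : (P : KSMat) + (Q : KSMat) + (R : KSMat) = 1) :
    c P = true ∨ c Q = true ∨ c R = true := by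
  have horth : ∀ i j : Fin 3, i ≠ j → (![P, Q, R] i : KSMat) * (![P, Q, R] j : KSMat) = 0 := by
    intro i j hij
    fin_cases i <;> fin_cases j <;> first | exact absurd rfl hij | assumption
  have hsum' : (∑ i, (![P, Q, R] i : KSMat)) = 1 := by
    rw [Fin.sum_univ_three]; exact hsum
  obtain ⟨w, hw, -⟩ := (hc 3 ![P, Q, R] horth).2 hsum'
  fin_cases w
  · exact Or.inl hw
  · exact Or.inr (Or.inl hw)
  · exact Or.inr (Or.inr hw)

theorem noKS : ¬ ∃ c : KSSI → Bool, IsSymKSColoring c := by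
  rintro ⟨c, hc⟩
  exact core_unsat
    (c (ksP 0))
    (c (ksP 1))
    (c (ksP 2))
    (c (ksP 3))
    (c (ksP 4))
    (c (ksP 5))
    (c (ksP 6))
    (c (ksP 7))
    (c (ksP 8))
    (c (ksP 9))
    (c (ksP 10))
    (c (ksP 11))
    (c (ksP 12))
    (c (ksP 13))
    (c (ksP 14))
    (c (ksP 15))
    (c (ksP 16))
    (c (ksP 17))
    (c (ksP 18))
    (c (ksP 19))
    (ks_basis hc (ksP 4) (ksP 10) (ksP 16) (by decide) (by decide) (by decide) (by decide) (by decide) (by decide) (by decide))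
    (ks_pair hc (ksP 4) (ksP 10) (by decide) (by decide))
    (ks_pair hc (ksP 4) (ksP 16) (by decide) (by decide))
    (ks_pair hc (ksP 10) (ksP 16) (by decide) (by decide))
    (ks_basis hc (ksP 8) (ksP 10) (ksP 17) (by decide) (by decide) (by decide) (by decide) (by decide) (by decide) (by decide))
    (ks_pair hc (ksP 8) (ksP 10) (by decide) (by decide))
    (ks_pair hc (ksP 8) (ksP 17) (by decide) (by decide))
    (ks_pair hc (ksP 10) (ksP 17) (by decide) (by decide))
    (ks_basis hc (ksP 0) (ksP 1) (ksP 3) (by decide) (by decide) (by decide) (by decide) (by decide) (by decide) (by decide))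
    (ks_pair hc (ksP 0) (ksP 1) (by decide) (by decide))
    (ks_pair hc (ksP 0) (ksP 3) (by decide) (by decide))
    (ks_pair hc (ksP 1) (ksP 3) (by decide) (by decide))
    (ks_basis hc (ksP 7) (ksP 9) (ksP 17) (by decide) (by decide) (by decide) (by decide) (by decide) (by decide) (by decide))
    (ks_pair hc (ksP 7) (ksP 9) (by decide) (by decide))
    (ks_pair hc (ksP 7) (ksP 17) (by decide) (by decide))
    (ks_pair hc (ksP 9) (ksP 17) (by decide) (by decide))
    (ks_basis hc (ksP 2) (ksP 10) (ksP 13) (by decide) (by decide) (by decide) (by decide) (by decide) (by decide) (by decide))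
    (ks_pair hc (ksP 2) (ksP 10) (by decide) (by decide))
    (ks_pair hc (ksP 2) (ksP 13) (by decide) (by decide))
    (ks_pair hc (ksP 10) (ksP 13) (by decide) (by decide))
    (ks_basis hc (ksP 5) (ksP 7) (ksP 14) (by decide) (by decide) (by decide) (by decide) (by decide) (by decide) (by decide))
    (ks_pair hc (ksP 5) (ksP 7) (by decide) (by decide))
    (ks_pair hc (ksP 5) (ksP 14) (by decide) (by decide))
    (ks_pair hc (ksP 7) (ksP 14) (by decide) (by decide))
    (ks_basis hc (ksP 6) (ksP 18) (ksP 19) (by decide) (by decide) (by decide) (by decide) (by decide) (by decide) (by decide))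
    (ks_pair hc (ksP 6) (ksP 18) (by decide) (by decide))
    (ks_pair hc (ksP 6) (ksP 19) (by decide) (by decide))
    (ks_pair hc (ksP 18) (ksP 19) (by decide) (by decide))
    (ks_basis hc (ksP 2) (ksP 15) (ksP 18) (by decide) (by decide) (by decide) (by decide) (by decide) (by decide) (by decide))
    (ks_pair hc (ksP 2) (ksP 15) (by decide) (by decide))
    (ks_pair hc (ksP 2) (ksP 18) (by decide) (by decide))
    (ks_pair hc (ksP 15) (ksP 18) (by decide) (by decide))
    (ks_basis hc (ksP 5) (ksP 11) (ksP 18) (by decide) (by decide) (by decide) (by decide) (by decide) (by decide) (by decide))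
    (ks_pair hc (ksP 5) (ksP 11) (by decide) (by decide))
    (ks_pair hc (ksP 5) (ksP 18) (by decide) (by decide))
    (ks_pair hc (ksP 11) (ksP 18) (by decide) (by decide))
    (ks_basis hc (ksP 12) (ksP 16) (ksP 19) (by decide) (by decide) (by decide) (by decide) (by decide) (by decide) (by decide))
    (ks_pair hc (ksP 12) (ksP 16) (by decide) (by decide))
    (ks_pair hc (ksP 12) (ksP 19) (by decide) (by decide))
    (ks_pair hc (ksP 16) (ksP 19) (by decide) (by decide))
    (ks_basis hc (ksP 1) (ksP 4) (ksP 5) (by decide) (by decide) (by decide) (by decide) (by decide) (by decide) (by decide))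
    (ks_pair hc (ksP 1) (ksP 4) (by decide) (by decide))
    (ks_pair hc (ksP 1) (ksP 5) (by decide) (by decide))
    (ks_pair hc (ksP 4) (ksP 5) (by decide) (by decide))
    (ks_basis hc (ksP 0) (ksP 6) (ksP 17) (by decide) (by decide) (by decide) (by decide) (by decide) (by decide) (by decide))
    (ks_pair hc (ksP 0) (ksP 6) (by decide) (by decide))
    (ks_pair hc (ksP 0) (ksP 17) (by decide) (by decide))
    (ks_pair hc (ksP 6) (ksP 17) (by decide) (by decide))
    (ks_pair hc (ksP 8) (ksP 11) (by decide) (by decide))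
    (ks_pair hc (ksP 13) (ksP 14) (by decide) (by decide))
    (ks_pair hc (ksP 2) (ksP 3) (by decide) (by decide))
    (ks_pair hc (ksP 9) (ksP 15) (by decide) (by decide))
    (ks_pair hc (ksP 7) (ksP 12) (by decide) (by decide))

theorem noPrime : ¬ ∃ p : Set KSMat, IsSymPrimePartialIdeal p := by
  rintro ⟨p, hp⟩
  apply noKS
  classical
  refine ⟨fun P => if (P : KSMat) ∈ p then false else true, ?_⟩
  intro k e horth
  set S : Set KSMat := Set.range (fun i => (e i : KSMat)) with hS
  have hgen_comm : ∀ a ∈ S, ∀ b ∈ S, a * b = b * a := by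
    rintro a ⟨i, rfl⟩ b ⟨j, rfl⟩
    by_cases hij : i = j
    · subst hij; rfl
    · rw [horth i j hij, horth j i (Ne.symm hij)]
  have hcomm' : ∀ x ∈ Subring.closure S, ∀ y ∈ Subring.closure S, x * y = y * x := by
    intro x hx y hy
    induction hx, hy using Subring.closure_induction₂ with
    | mem_mem a b ha hb => exact hgen_comm a ha b hb
    | zero_left x hx => simp
    | zero_right x hx => simp
    | one_left x hx => simp
    | one_right x hx => simp
    | neg_left x y hx hy h => rw [neg_mul, h, mul_neg]
    | neg_right x y hx hy h => rw [mul_neg, h, neg_mul]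
    | add_left x y z hx hy hz h1 h2 => rw [add_mul, mul_add, h1, h2]
    | add_right x y z hx hy hz h1 h2 => rw [mul_add, add_mul, h1, h2]
    | mul_left x y z hx hy hz h1 h2 => rw [mul_assoc, h2, ← mul_assoc, h1, mul_assoc]
    | mul_right x y z hx hy hz h1 h2 => rw [← mul_assoc, h1, mul_assoc, h2, ← mul_assoc]
  have hsymm' : ∀ x ∈ Subring.closure S, xᵀ = x := by
    intro x hx
    induction hx using Subring.closure_induction with
    | mem a ha => obtain ⟨i, rfl⟩ := ha; exact (e i).2.1
    | zero => exact Matrix.transpose_zero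
    | one => exact Matrix.transpose_one
    | add x y hx hy h1 h2 => rw [Matrix.transpose_add, h1, h2]
    | neg x hx h => rw [Matrix.transpose_neg, h]
    | mul x y hx hy h1 h2 => rw [Matrix.transpose_mul, h1, h2, hcomm' y hy x hx]
  obtain ⟨I, hIp, hIiff⟩ := hp.2 (Subring.closure S)
    (fun x y => Subtype.ext (hcomm' x.1 x.2 y.1 y.2)) (fun x => hsymm' x.1 x.2)
  have hmem : ∀ i : Fin k, (e i : KSMat) ∈ Subring.closure S :=
    fun i => Subring.subset_closure ⟨i, rfl⟩
  have hAMO : ∀ i j : Fin k,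
      (if (e i : KSMat) ∈ p then false else true) = true →
      (if (e j : KSMat) ∈ p then false else true) = true → i = j := by
    intro i j hi hj
    by_contra hij
    have hpi : (e i : KSMat) ∉ p := fun hm => by simp [hm] at hi
    have hpj : (e j : KSMat) ∉ p := fun hm => by simp [hm] at hj
    have hxij : (⟨(e i : KSMat), hmem i⟩ : Subring.closure S) *
        ⟨(e j : KSMat), hmem j⟩ = 0 := Subtype.ext (horth i j hij)
    rcases hIp.mem_or_mem (hxij ▸ I.zero_mem) with h | h
    · exact hpi ((hIiff _).1 h)
    · exact hpj ((hIiff _).1 h)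
  refine ⟨hAMO, ?_⟩
  intro hsum
  have hex : ∃ i, (e i : KSMat) ∉ p := by
    by_contra hall
    push_neg at hall
    have hsmem : (∑ i, (⟨(e i : KSMat), hmem i⟩ : Subring.closure S)) ∈ I :=
      Ideal.sum_mem _ (fun i _ => (hIiff _).2 (hall i))
    have heq : (∑ i, (⟨(e i : KSMat), hmem i⟩ : Subring.closure S)) = 1 := by
      apply Subtype.ext
      push_cast
      exact hsum
    rw [heq] at hsmem
    exact hIp.ne_top (I.eq_top_of_isUnit_mem hsmem isUnit_one)
  obtain ⟨i, hi⟩ := hex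
  exact ⟨i, by simp [hi], fun j hj => hAMO j i hj (by simp [hi])⟩

/-- There is no Kochen–Specker coloring of the symmetric idempotents of `M₃(𝔽₅)`, and the
partial ring `M₃(𝔽₅)_sym` has no prime partial ideal. -/
theorem no_sym_KS_coloring_and_no_prime_partial_ideal_M3_F5 :
    (¬ ∃ c : {P : Matrix (Fin 3) (Fin 3) (ZMod 5) // Pᵀ = P ∧ P * P = P} → Bool,
        IsSymKSColoring c) ∧
    (¬ ∃ p : Set (Matrix (Fin 3) (Fin 3) (ZMod 5)), IsSymPrimePartialIdeal p) := by
  exact ⟨noKS, noPrime⟩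
end

section
/- Let S be a finite set of nonzero vectors in ℤ³ (functions Fin 3 → ℤ). Suppose S admits no Kochen–Specker coloring of vectors. Then 6 divides the least common multiple of the integers v ⬝ᵥ v (the sum of the squares of the entries of v) taken over all v ∈ S. -/
open Matrix

/-- A Kochen–Specker coloring of a finite set `S` of vectors in `ℤ³`: a `Bool`-valued
function on `S` such that no two orthogonal vectors of `S` are both colored `true`, and
among any three pairwise orthogonal vectors of `S`, exactly one is colored `true`. -/
def IsVecKSColoring (S : Finset (Fin 3 → ℤ)) (c : {v : Fin 3 → ℤ // v ∈ S} → Bool) : Prop :=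
  (∀ u v : {v : Fin 3 → ℤ // v ∈ S}, (u : Fin 3 → ℤ) ⬝ᵥ (v : Fin 3 → ℤ) = 0 →
    ¬ (c u = true ∧ c v = true)) ∧
  (∀ u v w : {v : Fin 3 → ℤ // v ∈ S},
    (u : Fin 3 → ℤ) ⬝ᵥ (v : Fin 3 → ℤ) = 0 →
    (u : Fin 3 → ℤ) ⬝ᵥ (w : Fin 3 → ℤ) = 0 →
    (v : Fin 3 → ℤ) ⬝ᵥ (w : Fin 3 → ℤ) = 0 →
    ((c u = true ∧ c v = false ∧ c w = false) ∨
     (c u = false ∧ c v = true ∧ c w = false) ∨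
     (c u = false ∧ c v = false ∧ c w = true)))

/-- Mod-2 coloring: true iff the reduction is `(1,0,0)`. -/
def ksF2 (x : Fin 3 → ZMod 2) : Bool := decide (x = ![1,0,0])

/-- Mod-3 coloring: true iff the reduction is `±(1,0,0)`, `±(1,0,1)` or `±(1,1,0)`. -/
def ksF3 (x : Fin 3 → ZMod 3) : Bool :=
  decide (x = ![1,0,0] ∨ x = ![2,0,0] ∨ x = ![1,0,1] ∨ x = ![2,0,2] ∨
    x = ![1,1,0] ∨ x = ![2,2,0])

set_option synthInstance.maxSize 20000 in
set_option synthInstance.maxHeartbeats 2000000 in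
set_option maxHeartbeats 4000000 in
lemma ksPair2 : ∀ x y : Fin 3 → ZMod 2, x ⬝ᵥ x ≠ 0 → y ⬝ᵥ y ≠ 0 → x ⬝ᵥ y = 0 →
    ¬(ksF2 x = true ∧ ksF2 y = true) := by decide

set_option synthInstance.maxSize 20000 in
set_option synthInstance.maxHeartbeats 2000000 in
set_option maxHeartbeats 4000000 in
lemma ksTriple2 : ∀ x y z : Fin 3 → ZMod 2, x ⬝ᵥ x ≠ 0 → y ⬝ᵥ y ≠ 0 → z ⬝ᵥ z ≠ 0 →
    x ⬝ᵥ y = 0 → x ⬝ᵥ z = 0 → y ⬝ᵥ z = 0 →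
    ((ksF2 x = true ∧ ksF2 y = false ∧ ksF2 z = false) ∨
     (ksF2 x = false ∧ ksF2 y = true ∧ ksF2 z = false) ∨
     (ksF2 x = false ∧ ksF2 y = false ∧ ksF2 z = true)) := by decide

set_option synthInstance.maxSize 20000 in
set_option synthInstance.maxHeartbeats 2000000 in
set_option maxHeartbeats 4000000 in
lemma ksPair3 : ∀ x y : Fin 3 → ZMod 3, x ⬝ᵥ x ≠ 0 → y ⬝ᵥ y ≠ 0 → x ⬝ᵥ y = 0 →
    ¬(ksF3 x = true ∧ ksF3 y = true) := by decide

set_option synthInstance.maxSize 20000 in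
set_option synthInstance.maxHeartbeats 2000000 in
set_option maxHeartbeats 10000000 in
lemma ksTriple3 : ∀ x y z : Fin 3 → ZMod 3, x ⬝ᵥ x ≠ 0 → y ⬝ᵥ y ≠ 0 → z ⬝ᵥ z ≠ 0 →
    x ⬝ᵥ y = 0 → x ⬝ᵥ z = 0 → y ⬝ᵥ z = 0 →
    ((ksF3 x = true ∧ ksF3 y = false ∧ ksF3 z = false) ∨
     (ksF3 x = false ∧ ksF3 y = true ∧ ksF3 z = false) ∨
     (ksF3 x = false ∧ ksF3 y = false ∧ ksF3 z = true)) := by decide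

lemma ksCast (p : ℕ) [NeZero p] (u v : Fin 3 → ℤ) :
    ((u ⬝ᵥ v : ℤ) : ZMod p) =
      ((Int.castRingHom (ZMod p)) ∘ u) ⬝ᵥ ((Int.castRingHom (ZMod p)) ∘ v) :=
  RingHom.map_dotProduct (Int.castRingHom (ZMod p)) u v

/-- If a finite set `S` of nonzero integer vectors in `ℤ³` admits no Kochen–Specker
coloring, then `6` divides the least common multiple of the squared norms `v ⬝ᵥ v` for
`v ∈ S`. -/
theorem six_dvd_lcm_of_uncolorable (S : Finset (Fin 3 → ℤ)) (hS : ∀ v ∈ S, v ≠ 0)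
    (h : ¬ ∃ c : {v : Fin 3 → ℤ // v ∈ S} → Bool, IsVecKSColoring S c) :
    (6 : ℤ) ∣ S.lcm (fun v => v ⬝ᵥ v) := by
  by_contra h6
  apply h
  set L := S.lcm (fun v => v ⬝ᵥ v) with hL
  have h23 : ¬ (2 : ℤ) ∣ L ∨ ¬ (3 : ℤ) ∣ L := by
    by_contra hc
    push_neg at hc
    have hcop : IsCoprime (2 : ℤ) 3 := ⟨-1, 1, by ring⟩
    have := hcop.mul_dvd hc.1 hc.2
    norm_num at this
    exact h6 this
  rcases h23 with hp | hp
  · -- mod 2 coloring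
    have hnorm : ∀ v : {v : Fin 3 → ℤ // v ∈ S},
        ((Int.castRingHom (ZMod 2)) ∘ (v : Fin 3 → ℤ)) ⬝ᵥ
          ((Int.castRingHom (ZMod 2)) ∘ (v : Fin 3 → ℤ)) ≠ 0 := by
      intro v
      rw [← ksCast]
      intro h0
      rw [ZMod.intCast_zmod_eq_zero_iff_dvd] at h0
      exact hp (dvd_trans (by exact_mod_cast h0) (Finset.dvd_lcm v.2))
    refine ⟨fun v => ksF2 ((Int.castRingHom (ZMod 2)) ∘ (v : Fin 3 → ℤ)), ?_, ?_⟩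
    · intro u v huv
      exact ksPair2 _ _ (hnorm u) (hnorm v)
        (by rw [← ksCast]; rw [huv]; simp)
    · intro u v w huv huw hvw
      exact ksTriple2 _ _ _ (hnorm u) (hnorm v) (hnorm w)
        (by rw [← ksCast, huv]; simp) (by rw [← ksCast, huw]; simp)
        (by rw [← ksCast, hvw]; simp)
  · -- mod 3 coloring
    have hnorm : ∀ v : {v : Fin 3 → ℤ // v ∈ S},
        ((Int.castRingHom (ZMod 3)) ∘ (v : Fin 3 → ℤ)) ⬝ᵥ
          ((Int.castRingHom (ZMod 3)) ∘ (v : Fin 3 → ℤ)) ≠ 0 := by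
      intro v
      rw [← ksCast]
      intro h0
      rw [ZMod.intCast_zmod_eq_zero_iff_dvd] at h0
      exact hp (dvd_trans (by exact_mod_cast h0) (Finset.dvd_lcm v.2))
    refine ⟨fun v => ksF3 ((Int.castRingHom (ZMod 3)) ∘ (v : Fin 3 → ℤ)), ?_, ?_⟩
    · intro u v huv
      exact ksPair3 _ _ (hnorm u) (hnorm v)
        (by rw [← ksCast]; rw [huv]; simp)
    · intro u v w huv huw hvw
      exact ksTriple3 _ _ _ (hnorm u) (hnorm v) (hnorm w)
        (by rw [← ksCast, huv]; simp) (by rw [← ksCast, huw]; simp)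
        (by rw [← ksCast, hvw]; simp)
end

section
/- Let F : RingCatᵒᵖ ⥤ Type be a functor, and suppose there is a natural isomorphism between the composite of the opposite of the inclusion functor CommRingCat ⥤ RingCat with F and the prime spectrum functor CommRingCatᵒᵖ ⥤ Type (sending a commutative ring A to PrimeSpectrum A and a ring homomorphism f to PrimeSpectrum.comap f). Then for every ring R and every natural number n ≥ 3, the set F.obj (op (RingCat.of (Matrix (Fin n) (Fin n) R))) is empty. -/
/-!
A point `p` of `F (Mₙ(R))` restricts, along every ring map `A → Mₙ(R)` from a commutative ring,
to a prime of `A`, compatibly in `A`. Call an idempotent `x` colored if the prime attached to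
`ℤ² → Mₙ(R)`, `(a, b) ↦ a x + b (1 - x)`, misses `(1, 0)`. A prime of `ℤⁱ` misses exactly one
coordinate idempotent, so every complete orthogonal family of idempotents has exactly one colored
member. Some diagonal unit `Eᵢᵢ` is colored; embedding `M₃(ℤ)` as a corner of `Mₙ(R)` containing
it, the colored idempotents of `M₃(ℤ)` pick exactly one member of every complete orthogonal
triple. A Kochen–Specker configuration of 44 rank-one idempotents in 33 such triples, refuted by
a verified exhaustive search, admits no such choice.
-/

open CategoryTheory Opposite

universe u

/-- The prime spectrum functor `CommRingCatᵒᵖ ⥤ Type`, sending a commutative ring `A` to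
its set of prime ideals and a ring homomorphism to the preimage map on prime ideals. -/
def primeSpectrumFunctor : CommRingCat.{u}ᵒᵖ ⥤ Type u where
  obj A := PrimeSpectrum A.unop
  map f := TypeCat.ofHom (PrimeSpectrum.comap f.unop.hom)
  map_id := by
    intro A
    refine ConcreteCategory.hom_ext _ _ fun x => ?_
    show PrimeSpectrum.comap (RingHom.id _) x = x
    simp
  map_comp := by
    intro A B C f g
    ext x
    rfl

theorem Ideal.IsPrime.existsUnique_notMem {A : Type*} [CommSemiring A] {P : Ideal A} (hP : P.IsPrime)
    {ι : Type*} [Fintype ι] {e : ι → A} (he : CompleteOrthogonalIdempotents e) :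
    ∃! i, e i ∉ P := by
  obtain ⟨i, -, hi⟩ : ∃ i ∈ Finset.univ, e i ∉ P := by
    by_contra! h
    exact hP.ne_top ((P.eq_top_iff_one).mpr (he.complete ▸ P.sum_mem h))
  refine ⟨i, hi, fun j hj => ?_⟩
  by_contra hji
  exact (hP.mem_or_mem (he.ortho hji ▸ P.zero_mem : e j * e i ∈ P)).elim hj hi

theorem OrthogonalIdempotents.map_nonUnitalRingHom {R S : Type*} [Semiring R] [Semiring S]
    {ι : Type*} {e : ι → R} (he : OrthogonalIdempotents e) (f : R →ₙ+* S) :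
    OrthogonalIdempotents (f ∘ e) :=
  ⟨fun i => (he.idem i).map f, fun i j hij => by simp [← map_mul, he.ortho hij]⟩

namespace CompleteOrthogonalIdempotents

variable {R S : Type*} [Ring R] [Ring S] {ι : Type*} [Fintype ι] {e : ι → R}

def intPiHom (he : CompleteOrthogonalIdempotents e) : (ι → ULift.{u} ℤ) →+* R where
  toFun x := ∑ i, (x i).down • e i
  map_one' := by simp [he.complete]
  map_mul' x y := by
    classical
    simp only [Pi.mul_apply, ULift.mul_down, Finset.sum_mul_sum, smul_mul_smul_comm, he.mul_eq,
      smul_ite, smul_zero, Finset.sum_ite_eq, Finset.mem_univ, if_true]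
  map_zero' := by simp
  map_add' x y := by simp [add_smul, Finset.sum_add_distrib]

theorem intPiHom_apply (he : CompleteOrthogonalIdempotents e) (x : ι → ULift.{u} ℤ) :
    he.intPiHom x = ∑ i, (x i).down • e i := rfl

theorem intPiHom_single [DecidableEq ι] (he : CompleteOrthogonalIdempotents e) (i : ι) :
    he.intPiHom (Pi.single i 1) = e i := by
  simp [intPiHom_apply, Pi.single_apply, apply_ite ULift.down]

theorem comp_intPiHom (he : CompleteOrthogonalIdempotents e) {e' : ι → S}
    (he' : CompleteOrthogonalIdempotents e') (f : R →+* S) (h : ∀ i, f (e i) = e' i) :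
    f.comp (he.intPiHom : (ι → ULift.{u} ℤ) →+* R) = he'.intPiHom :=
  RingHom.ext fun x => by simp [intPiHom_apply, map_sum, h]

end CompleteOrthogonalIdempotents

structure CompatiblePrimes (M : Type u) [Ring M] where
  prime (A : Type u) [CommRing A] : (A →+* M) → PrimeSpectrum A
  prime_comp {A B : Type u} [CommRing A] [CommRing B] (g : A →+* B) (f : B →+* M) :
    prime A (f.comp g) = PrimeSpectrum.comap g (prime B f)

namespace CompatiblePrimes

def ofFunctor (F : RingCat.{u}ᵒᵖ ⥤ Type u)
    (η : (forget₂ CommRingCat RingCat).op ⋙ F ⟶ primeSpectrumFunctor.{u})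
    {M : Type u} [Ring M] (p : F.obj (op (RingCat.of M))) : CompatiblePrimes M where
  prime A _ f := η.app (op (CommRingCat.of A)) (F.map (RingCat.ofHom f).op p)
  prime_comp g f := by
    have := ConcreteCategory.congr_hom (η.naturality (CommRingCat.ofHom g).op)
      (F.map (RingCat.ofHom f).op p)
    rwa [types_comp_apply, types_comp_apply, Functor.comp_map,
      ← types_comp_apply (F.map _) (F.map _), ← F.map_comp] at this

variable {M : Type u} [Ring M] (P : CompatiblePrimes M)

/-- The point lies on the locus where the idempotent `x` equals `1`. -/
def IsColored (x : M) : Prop :=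
  ∃ (A : Type u) (_ : CommRing A) (f : A →+* M) (a : A),
    IsIdempotentElem a ∧ f a = x ∧ a ∉ (P.prime A f).asIdeal

/-- `ℤ² → M`, `(a, b) ↦ a x + b (1 - x)`, factors through every commutative lift of `x`. -/
theorem notMem_prime_iff {x : M} (hx : IsIdempotentElem x) {A : Type u} [CommRing A]
    (f : A →+* M) {a : A} (ha : IsIdempotentElem a) (hfa : f a = x) :
    a ∉ (P.prime A f).asIdeal ↔ (Pi.single 0 1 : Fin 2 → ULift.{u} ℤ) ∉
      (P.prime _ (CompleteOrthogonalIdempotents.of_isIdempotentElem hx).intPiHom).asIdeal := by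
  have ha' := CompleteOrthogonalIdempotents.of_isIdempotentElem ha
  rw [← ha'.comp_intPiHom _ f (by simp [Fin.forall_fin_two, hfa]), P.prime_comp,
    PrimeSpectrum.comap_asIdeal, Ideal.mem_comap, ha'.intPiHom_single]
  rfl

theorem isColored_iff {A : Type u} [CommRing A] (f : A →+* M) {a : A} (ha : IsIdempotentElem a) :
    P.IsColored (f a) ↔ a ∉ (P.prime A f).asIdeal :=
  ⟨fun ⟨_, _, g, _, hb, hgb, hbP⟩ => (P.notMem_prime_iff (ha.map f) f ha rfl).mpr
    ((P.notMem_prime_iff (ha.map f) g hb hgb).mp hbP), fun h => ⟨A, _, f, a, ha, rfl, h⟩⟩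

theorem existsUnique_isColored {ι : Type} [Fintype ι] {e : ι → M}
    (he : CompleteOrthogonalIdempotents e) : ∃! i, P.IsColored (e i) := by
  classical
  have hsingle := CompleteOrthogonalIdempotents.single fun _ : ι => ULift.{u} ℤ
  have key (i : ι) : P.IsColored (e i) ↔ Pi.single i 1 ∉ (P.prime _ he.intPiHom).asIdeal := by
    rw [← he.intPiHom_single i]
    exact P.isColored_iff _ (hsingle.idem i)
  simp_rw [key]
  exact (P.prime _ he.intPiHom).isPrime.existsUnique_notMem hsingle

theorem isColored_one_sub_iff {x : M} (hx : IsIdempotentElem x) :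
    P.IsColored (1 - x) ↔ ¬ P.IsColored x := by
  obtain ⟨i, hi, huniq⟩ :=
    P.existsUnique_isColored (CompleteOrthogonalIdempotents.of_isIdempotentElem hx)
  refine ⟨fun h1 h0 => absurd ((huniq 1 h1).trans (huniq 0 h0).symm) (by decide), fun h0 => ?_⟩
  fin_cases i
  exacts [absurd hi h0, hi]

variable {ι : Type} [Fintype ι] {e : ι → M}

theorem existsUnique_isColored_of_isColored_sum (he : OrthogonalIdempotents e)
    (h : P.IsColored (∑ i, e i)) : ∃! i, P.IsColored (e i) := by
  obtain ⟨j, hj, huniq⟩ := P.existsUnique_isColored (CompleteOrthogonalIdempotents.option he)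
  cases j with
  | none => exact absurd h ((P.isColored_one_sub_iff he.isIdempotentElem_sum).mp hj)
  | some i => exact ⟨i, hj, fun k hk => Option.some_injective _ (huniq (some k) hk)⟩

theorem isColored_sum (he : OrthogonalIdempotents e) {i : ι} (h : P.IsColored (e i)) :
    P.IsColored (∑ i, e i) := by
  obtain ⟨j, -, huniq⟩ := P.existsUnique_isColored (CompleteOrthogonalIdempotents.option he)
  by_contra hsum
  exact Option.some_ne_none i ((huniq (some i) h).trans
    (huniq none ((P.isColored_one_sub_iff he.isIdempotentElem_sum).mpr hsum)).symm)

theorem existsUnique_isColored_comp {S : Type*} [Ring S] (ψ : S →ₙ+* M)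
    (hψ : P.IsColored (ψ 1)) {e : ι → S} (he : CompleteOrthogonalIdempotents e) :
    ∃! i, P.IsColored (ψ (e i)) :=
  P.existsUnique_isColored_of_isColored_sum (he.toOrthogonalIdempotents.map_nonUnitalRingHom ψ)
    (by simpa [← map_sum, he.complete] using hψ)

end CompatiblePrimes

namespace Matrix

variable {R : Type*}

theorem completeOrthogonalIdempotents_single {n : Type*} [Fintype n] [DecidableEq n] [Semiring R] :
    CompleteOrthogonalIdempotents fun i : n => (single i i 1 : Matrix n n R) := by
  simpa [Function.comp_def, diagonal_single] using
    (CompleteOrthogonalIdempotents.single fun _ : n => R).map (diagonalRingHom n R)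

theorem completeOrthogonalIdempotents_vecMulVec {n : Type*} [Fintype n] [DecidableEq n]
    [CommRing R] (v w : n → n → R) (h : ∀ i j, w i ⬝ᵥ v j = if i = j then 1 else 0) :
    CompleteOrthogonalIdempotents fun i => vecMulVec (v i) (w i) := by
  refine CompleteOrthogonalIdempotents.iff_ortho_complete.mpr ⟨fun i j hij => ?_, ?_⟩
  · simp [vecMulVec_mul_vecMulVec, h, hij]
  · have hwv : (of w) * (of fun r j => v j r) = 1 := by
      ext i j
      simpa [mul_apply, dotProduct, one_apply] using h i j
    have hvw : (of fun r j => v j r : Matrix n n R) * of w = 1 := mul_eq_one_comm.mp hwv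
    ext r c
    simpa [mul_apply, vecMulVec_apply, sum_apply] using Matrix.ext_iff.mpr hvw r c

variable {N m m' : Type*} [Fintype N] [Fintype m] [Fintype m']

def cornerHom [NonUnitalNonAssocSemiring R] (σ : N ≃ m ⊕ m') : Matrix m m R →ₙ+* Matrix N N R where
  toFun a := (fromBlocks a 0 0 0).submatrix σ σ
  map_mul' a b := by rw [submatrix_mul_equiv, fromBlocks_multiply]; simp
  map_zero' := by ext; simp
  map_add' a b := by
    change _ = (fromBlocks a 0 0 0 + fromBlocks b 0 0 0).submatrix σ σ
    simp only [fromBlocks_add, add_zero]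

theorem cornerHom_single [DecidableEq N] [DecidableEq m] [DecidableEq m']
    [NonUnitalNonAssocSemiring R] (σ : N ≃ m ⊕ m') (i j : m) (r : R) :
    cornerHom σ (single i j r) = single (σ.symm (.inl i)) (σ.symm (.inl j)) r := by
  change (fromBlocks _ 0 0 0).submatrix σ σ = _
  rw [← submatrix_single_equiv]
  congr 1
  ext (k | k) (l | l) <;> simp [single_apply]

end Matrix

theorem exists_equiv_sum_symm_inl_eq {k n : ℕ} (hk : k ≤ n) (j : Fin k) (i : Fin n) :
    ∃ σ : Fin n ≃ Fin k ⊕ Fin (n - k), σ.symm (.inl j) = i := by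
  let σ₀ : Fin n ≃ Fin k ⊕ Fin (n - k) := (finCongr (by omega)).trans finSumFinEquiv.symm
  exact ⟨(Equiv.swap i (σ₀.symm (.inl j))).trans σ₀, by simp⟩

namespace OneInThreeSat

variable {α : Type*}

def Satisfies (col : α → Bool) (t : α × α × α) : Prop :=
  ∃! i : Fin 3, col (![t.1, t.2.1, t.2.2] i) = true

def choices : α × α × α → List (List (α × Bool))
  | (x, y, z) =>
    [[(x, true), (y, false), (z, false)], [(x, false), (y, true), (z, false)],
      [(x, false), (y, false), (z, true)]]

def Extends (col : α → Bool) (asg : α → Option Bool) : Prop :=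
  ∀ x b, asg x = some b → col x = b

def options (asg : α → Option Bool) (t : α × α × α) : List (List (α × Bool)) :=
  (choices t).filter fun l => l.all fun p => asg p.1 != some !p.2

def assign [DecidableEq α] (asg : α → Option Bool) (l : List (α × Bool)) : α → Option Bool :=
  l.foldr (fun p a y => if y = p.1 then some p.2 else a y) asg

def branching (cs : List (α × α × α)) (asg : α → Option Bool) :
    Option (List (List (α × Bool))) :=
  let live := (cs.filter fun t => asg t.1 == none || asg t.2.1 == none || asg t.2.2 == none).map
    (options asg)
  (live.find? (·.length == 1)).or live.head?

/-- Depth-bounded search for a refutation below `asg`; the branching heuristic (forced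
constraints first) affects only the running time, not `refute_sound`. -/
def refute [DecidableEq α] (cs : List (α × α × α)) : ℕ → (α → Option Bool) → Bool
  | 0, _ => false
  | n + 1, asg =>
    cs.any (fun t => (options asg t).isEmpty) ||
      match branching cs asg with
      | none => false
      | some ls => ls.all fun l => refute cs n (assign asg l)

variable {col : α → Bool} {asg : α → Option Bool}

theorem exists_choice {t : α × α × α} (h : Satisfies col t) :
    ∃ l ∈ choices t, ∀ p ∈ l, col p.1 = p.2 := by
  obtain ⟨x, y, z⟩ := t
  obtain ⟨i, hi, hu⟩ := h
  have hne (j : Fin 3) (hj : j ≠ i) : col (![x, y, z] j) = false :=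
    Bool.eq_false_iff.mpr fun h => hj (hu j h)
  fin_cases i
  · exact ⟨[(x, true), (y, false), (z, false)], by simp [choices],
      by simpa using ⟨hi, hne 1 (by decide), hne 2 (by decide)⟩⟩
  · exact ⟨[(x, false), (y, true), (z, false)], by simp [choices],
      by simpa using ⟨hne 0 (by decide), hi, hne 2 (by decide)⟩⟩
  · exact ⟨[(x, false), (y, false), (z, true)], by simp [choices],
      by simpa using ⟨hne 0 (by decide), hne 1 (by decide), hi⟩⟩

theorem mem_options (hcol : Extends col asg) {t : α × α × α} {l : List (α × Bool)}
    (hl : l ∈ choices t) (hagree : ∀ p ∈ l, col p.1 = p.2) : l ∈ options asg t := by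
  refine List.mem_filter.mpr ⟨hl, List.all_eq_true.mpr fun p hp => ?_⟩
  rw [bne_iff_ne, ne_eq]
  intro h
  simpa [hagree p hp] using hcol _ _ h

theorem extends_assign [DecidableEq α] (hcol : Extends col asg) {l : List (α × Bool)}
    (hagree : ∀ p ∈ l, col p.1 = p.2) : Extends col (assign asg l) := by
  induction l with
  | nil => exact hcol
  | cons p l ih =>
    intro x b hx
    simp only [assign, List.foldr_cons] at hx
    split_ifs at hx with hxp
    · rw [hxp, ← Option.some_inj.mp hx]
      exact hagree p List.mem_cons_self
    · exact ih (fun q hq => hagree q (List.mem_cons_of_mem p hq)) x b hx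

theorem exists_of_branching {cs : List (α × α × α)} {ls : List (List (α × Bool))}
    (h : branching cs asg = some ls) : ∃ t ∈ cs, ls = options asg t := by
  have hmem : ls ∈ (cs.filter fun t => asg t.1 == none || asg t.2.1 == none ||
      asg t.2.2 == none).map (options asg) := by
    rcases Option.or_eq_some_iff.mp h with h | ⟨-, h⟩
    · exact List.mem_of_find?_eq_some h
    · exact List.mem_of_head? h
  obtain ⟨t, ht, rfl⟩ := List.mem_map.mp hmem
  exact ⟨t, (List.mem_filter.mp ht).1, rfl⟩

theorem refute_sound [DecidableEq α] {cs : List (α × α × α)} {n : ℕ}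
    (h : refute cs n asg = true) (hcol : Extends col asg) : ¬ ∀ t ∈ cs, Satisfies col t := by
  intro hsat
  induction n generalizing asg with
  | zero => exact Bool.false_ne_true h
  | succ n ih =>
    simp only [refute, Bool.or_eq_true, List.any_eq_true, List.isEmpty_iff] at h
    rcases h with ⟨t, ht, hempty⟩ | h
    · obtain ⟨l, hl, hagree⟩ := exists_choice (hsat t ht)
      simpa [hempty] using mem_options hcol hl hagree
    · split at h
      · exact Bool.false_ne_true h
      · obtain ⟨t, ht, rfl⟩ := exists_of_branching ‹_›
        obtain ⟨l, hl, hagree⟩ := exists_choice (hsat t ht)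
        exact ih (List.all_eq_true.mp h l (mem_options hcol hl hagree))
          (extends_assign hcol hagree)

theorem exists_not_satisfies_of_refute [DecidableEq α] {cs : List (α × α × α)} {n : ℕ}
    (h : refute cs n (fun _ => none) = true) (col : α → Bool) : ∃ t ∈ cs, ¬ Satisfies col t := by
  by_contra! hsat
  exact refute_sound h (fun _ _ hx => nomatch hx) hsat

end OneInThreeSat

/-- Pairs `(v, w)` with `w ⬝ᵥ v = 1`, encoding the rank-one idempotents `v wᵀ`. -/
def kochenSpeckerVectors : Fin 44 → (Fin 3 → ℤ) × (Fin 3 → ℤ) :=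
  ![(![1, 1, 1], ![-1, 1, 1]), (![1, 0, 1], ![0, -1, 1]), (![0, 1, -1], ![-1, 1, 0]),
    (![0, 1, 0], ![-1, 1, 1]), (![0, 1, -1], ![0, 0, -1]), (![0, 0, 1], ![-1, 0, 1]),
    (![0, 0, 1], ![-1, 1, 1]), (![0, 0, 1], ![0, 0, 1]), (![0, 0, 1], ![0, 1, 1]),
    (![0, 0, 1], ![1, -1, 1]), (![0, 0, 1], ![1, 0, 1]), (![0, 1, 1], ![0, 0, 1]),
    (![0, 1, 0], ![0, 1, -1]), (![0, 1, -1], ![0, 1, 0]), (![0, 1, 0], ![0, 1, 0]),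
    (![0, 1, 0], ![0, 1, 1]), (![0, 1, -1], ![1, 0, -1]), (![0, 1, 0], ![1, 1, -1]),
    (![0, 1, -1], ![1, 1, 0]), (![0, 1, 0], ![1, 1, 0]), (![1, -1, 1], ![0, 0, 1]),
    (![1, 0, 1], ![0, 0, 1]), (![1, 1, 1], ![0, 0, 1]), (![1, 1, 0], ![0, 1, -1]),
    (![1, 1, -1], ![0, 1, 0]), (![1, 1, 0], ![0, 1, 0]), (![1, 1, 1], ![0, 1, 0]),
    (![1, 0, 1], ![0, 1, 1]), (![1, 1, 0], ![0, 1, 1]), (![1, -1, 1], ![1, -1, -1]),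
    (![1, 0, 0], ![1, -1, -1]), (![1, 1, -1], ![1, -1, -1]), (![1, 0, -1], ![1, -1, 0]),
    (![1, 0, 0], ![1, -1, 0]), (![1, 0, 1], ![1, -1, 0]), (![1, -1, 0], ![1, 0, -1]),
    (![1, 0, 0], ![1, 0, -1]), (![1, 1, 0], ![1, 0, -1]), (![1, -1, 0], ![1, 0, 0]),
    (![1, -1, 1], ![1, 0, 0]), (![1, 0, -1], ![1, 0, 0]), (![1, 0, 0], ![1, 0, 0]),
    (![1, 0, 1], ![1, 0, 0]), (![1, 1, 0], ![1, 0, 0])]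

/-- The `v`'s of each triple form a basis of `ℤ³` with dual basis the `w`'s. -/
def kochenSpeckerBases : List (Fin 44 × Fin 44 × Fin 44) :=
  [(0, 34, 37), (1, 26, 36), (2, 6, 43), (2, 28, 31), (3, 4, 43), (3, 16, 42),
   (3, 21, 37), (4, 28, 30), (5, 19, 39), (5, 26, 34), (6, 13, 42), (6, 25, 34),
   (7, 14, 41), (7, 19, 38), (7, 25, 33), (8, 13, 41), (8, 18, 39), (8, 24, 33),
   (9, 25, 32), (10, 14, 40), (10, 24, 32), (11, 12, 41), (11, 17, 38), (12, 22, 36),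
   (13, 27, 30), (14, 21, 36), (15, 16, 39), (15, 20, 36), (16, 27, 29), (17, 21, 35),
   (19, 20, 35), (21, 25, 30), (22, 23, 33)]

def kochenSpeckerIdempotent (k : Fin 44) : Matrix (Fin 3) (Fin 3) ℤ :=
  Matrix.vecMulVec (kochenSpeckerVectors k).1 (kochenSpeckerVectors k).2

theorem completeOrthogonalIdempotents_kochenSpeckerBases {t : Fin 44 × Fin 44 × Fin 44}
    (ht : t ∈ kochenSpeckerBases) :
    CompleteOrthogonalIdempotents fun i => kochenSpeckerIdempotent (![t.1, t.2.1, t.2.2] i) := by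
  have hdual : kochenSpeckerBases.all (fun t => (List.finRange 3).all fun i =>
      (List.finRange 3).all fun j =>
        (kochenSpeckerVectors (![t.1, t.2.1, t.2.2] i)).2 ⬝ᵥ
          (kochenSpeckerVectors (![t.1, t.2.1, t.2.2] j)).1 == if i = j then 1 else 0) = true := by
    decide +kernel
  simp only [List.all_eq_true, List.mem_finRange, true_implies, beq_iff_eq] at hdual
  exact Matrix.completeOrthogonalIdempotents_vecMulVec _ _ (hdual t ht)

theorem refute_kochenSpeckerBases :
    OneInThreeSat.refute kochenSpeckerBases 44 (fun _ => none) = true := by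
  decide +kernel

theorem Matrix.exists_completeOrthogonalIdempotents_not_existsUnique
    (c : Matrix (Fin 3) (Fin 3) ℤ → Prop) :
    ∃ e : Fin 3 → Matrix (Fin 3) (Fin 3) ℤ, CompleteOrthogonalIdempotents e ∧ ¬ ∃! i, c (e i) := by
  classical
  obtain ⟨t, ht, hnot⟩ := OneInThreeSat.exists_not_satisfies_of_refute refute_kochenSpeckerBases
    fun k => decide (c (kochenSpeckerIdempotent k))
  exact ⟨_, completeOrthogonalIdempotents_kochenSpeckerBases ht,
    fun h => hnot (by simpa [OneInThreeSat.Satisfies] using h)⟩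

/-- If `F : RingCatᵒᵖ ⥤ Type` restricts (along the inclusion of commutative rings) to the
prime spectrum functor, then `F` assigns the empty set to `Mₙ(R)` for every ring `R` and
every `n ≥ 3`. -/
theorem empty_spectrum_of_matrix_ring (F : RingCat.{u}ᵒᵖ ⥤ Type u)
    (hF : Nonempty ((forget₂ CommRingCat RingCat).op ⋙ F ≅ primeSpectrumFunctor.{u}))
    (R : Type u) [Ring R] (n : ℕ) (hn : 3 ≤ n) :
    IsEmpty (F.obj (op (RingCat.of (Matrix (Fin n) (Fin n) R)))) := by
  obtain ⟨η⟩ := hF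
  refine ⟨fun p => ?_⟩
  let P := CompatiblePrimes.ofFunctor F η.hom p
  obtain ⟨i, hi, -⟩ := P.existsUnique_isColored Matrix.completeOrthogonalIdempotents_single
  obtain ⟨σ, hσ⟩ := exists_equiv_sum_symm_inl_eq hn 0 i
  let ψ : Matrix (Fin 3) (Fin 3) ℤ →ₙ+* Matrix (Fin n) (Fin n) R :=
    (Matrix.cornerHom σ).comp ((Int.castRingHom R).mapMatrix (m := Fin 3) : _ →ₙ+* _)
  have hsingle := Matrix.completeOrthogonalIdempotents_single (n := Fin 3) (R := ℤ)
  have h0 : ψ (Matrix.single 0 0 1) = Matrix.single i i 1 := by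
    change Matrix.cornerHom σ ((Int.castRingHom R).mapMatrix _) = _
    rw [RingHom.mapMatrix_apply, Matrix.map_single, map_one, Matrix.cornerHom_single, hσ]
  have hψ : P.IsColored (ψ 1) := by
    rw [← hsingle.complete, map_sum]
    exact P.isColored_sum (hsingle.toOrthogonalIdempotents.map_nonUnitalRingHom ψ) (i := 0)
      (h0 ▸ hi)
  obtain ⟨e, he, hne⟩ :=
    Matrix.exists_completeOrthogonalIdempotents_not_existsUnique fun a => P.IsColored (ψ a)
  exact hne (P.existsUnique_isColored_comp ψ hψ he)
end

section
/- Let R be a ring. If R has no prime partial ideal, then for every nontrivial commutative ring C there is no morphism of partial rings from R to C. -/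
/-- A prime partial ideal of a ring `R`. -/
def IsPrimePartialIdeal {R : Type*} [Ring R] (p : Set R) : Prop :=
  ∀ C : Subring R, (∀ x y : C, x * y = y * x) →
    ∃ I : Ideal C, I.IsPrime ∧ ∀ x : C, x ∈ I ↔ (x : R) ∈ p

/-- A morphism of partial rings from a ring `R` to a commutative ring `C`. -/
def IsPartialRingHom {R C : Type*} [Ring R] [CommRing C] (f : R → C) : Prop :=
  f 0 = 0 ∧ f 1 = 1 ∧
    ∀ x y : R, x * y = y * x → f (x + y) = f x + f y ∧ f (x * y) = f x * f y

/-- If a ring `R` has no prime partial ideal, then there is no morphism of partial rings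
from `R` to any nontrivial commutative ring. -/
theorem no_partial_ring_hom_of_no_prime_partial_ideal (R : Type*) [Ring R]
    (h : ¬ ∃ p : Set R, IsPrimePartialIdeal p)
    (C : Type*) [CommRing C] [Nontrivial C] :
    ¬ ∃ f : R → C, IsPartialRingHom f := by
  rintro ⟨f, hf0, hf1, hf⟩
  obtain ⟨q, hq⟩ := Ideal.exists_maximal C
  have hqp : q.IsPrime := hq.isPrime
  apply h
  refine ⟨{r : R | f r ∈ q}, fun S hcomm => ?_⟩
  have hcomm' : ∀ a b : S, (a : R) * b = (b : R) * a := by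
    intro a b
    exact_mod_cast congrArg (Subtype.val) (hcomm a b)
  let g : S →+* C :=
    { toFun := fun x => f x
      map_one' := hf1
      map_zero' := hf0
      map_mul' := by
        intro a b
        have := (hf a b (hcomm' a b)).2
        simpa using this
      map_add' := by
        intro a b
        have := (hf a b (hcomm' a b)).1
        simpa using this }
  refine ⟨q.comap g, hqp.comap g, fun x => Iff.rfl⟩
end

section
/- Let R be a ring and let c be a function from the set of idempotents {e : R | e * e = e} to Bool. Then c is a Kochen–Specker coloring of the idempotents of R if and only if the set B = {e | e * e = e ∧ c e = false} of black idempotents satisfies: (i) 0 ∈ B; (ii) for all commuting idempotents e, f with e * f = e (i.e., e ≤ f), if f ∈ B then e ∈ B; (iii) for all commuting idempotents e, f ∈ B, the idempotent e + f − e * f belongs to B; and (iv) 1 ∉ B, and for all commuting idempotents e, f with e * f ∈ B, either e ∈ B or f ∈ B. -/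
/-- A Kochen–Specker coloring of the idempotents of a ring `M`. -/
def IsKSColoring {M : Type*} [Ring M] (c : {e : M // e * e = e} → Bool) : Prop :=
  ∀ (k : ℕ) (e : Fin k → {e : M // e * e = e}),
    (∀ i j : Fin k, i ≠ j → (e i : M) * (e j : M) = 0) →
    ((∀ i j : Fin k, c (e i) = true → c (e j) = true → i = j) ∧
      ((∑ i, (e i : M)) = 1 → ∃! i : Fin k, c (e i) = true))

/-- The set of "black" idempotents of a coloring `c`: those idempotents colored `false`. -/
def blackSet {R : Type*} [Ring R] (c : {e : R // e * e = e} → Bool) : Set R :=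
  {x | ∃ h : x * x = x, c ⟨x, h⟩ = false}

section KSAux

set_option linter.unusedSectionVars false

variable {R : Type*} [Ring R] {c : {e : R // e * e = e} → Bool}

private lemma idem_compl {a : R} (ha : a * a = a) : (1 - a) * (1 - a) = 1 - a := by
  have h : (1 - a) * (1 - a) = 1 - a - a + a * a := by noncomm_ring
  rw [h, ha]; abel

section Algebra

variable {e f : R} (he : e * e = e) (hf : f * f = f) (hcomm : e * f = f * e)

include he hf hcomm

private lemma idem_mul : (e * f) * (e * f) = e * f := by
  calc (e * f) * (e * f) = e * ((f * e) * f) := by noncomm_ring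
    _ = e * ((e * f) * f) := by rw [hcomm]
    _ = (e * e) * (f * f) := by noncomm_ring
    _ = e * f := by rw [he, hf]

private lemma ef_mul_f : (e * f) * f = e * f := by rw [mul_assoc, hf]

private lemma f_mul_ef : f * (e * f) = e * f := by
  rw [← mul_assoc, ← hcomm, mul_assoc, hf]

private lemma e_mul_ef : e * (e * f) = e * f := by rw [← mul_assoc, he]

private lemma ef_mul_e : (e * f) * e = e * f := by rw [hcomm, mul_assoc, he]

private lemma idem_fsub : (f - e * f) * (f - e * f) = f - e * f := by
  calc (f - e * f) * (f - e * f)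
      = f * f - f * (e * f) - ((e * f) * f - (e * f) * (e * f)) := by noncomm_ring
    _ = f - e * f - (e * f - e * f) := by
        rw [hf, ef_mul_f he hf hcomm, f_mul_ef he hf hcomm, idem_mul he hf hcomm]
    _ = f - e * f := by abel

private lemma orth_e_fsub : e * (f - e * f) = 0 := by
  calc e * (f - e * f) = e * f - e * (e * f) := by noncomm_ring
    _ = 0 := by rw [e_mul_ef he hf hcomm, sub_self]

private lemma orth_fsub_e : (f - e * f) * e = 0 := by
  calc (f - e * f) * e = f * e - (e * f) * e := by noncomm_ring
    _ = 0 := by rw [← hcomm, ef_mul_e he hf hcomm, sub_self]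

private lemma idem_join : (e + f - e * f) * (e + f - e * f) = e + f - e * f := by
  calc (e + f - e * f) * (e + f - e * f)
      = e * e + e * f - e * (e * f) + (f * e + f * f - f * (e * f))
        - ((e * f) * e + (e * f) * f - (e * f) * (e * f)) := by noncomm_ring
    _ = e + e * f - e * f + (e * f + f - e * f) - (e * f + e * f - e * f) := by
        rw [he, hf, ef_mul_f he hf hcomm, f_mul_ef he hf hcomm, e_mul_ef he hf hcomm,
          ef_mul_e he hf hcomm, idem_mul he hf hcomm, ← hcomm]
    _ = e + f - e * f := by abel

private lemma e_mul_join : e * (e + f - e * f) = e := by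
  calc e * (e + f - e * f) = e * e + e * f - e * (e * f) := by noncomm_ring
    _ = e := by rw [he, e_mul_ef he hf hcomm]; abel

private lemma join_mul_e : (e + f - e * f) * e = e := by
  calc (e + f - e * f) * e = e * e + f * e - (e * f) * e := by noncomm_ring
    _ = e := by rw [he, ← hcomm, ef_mul_e he hf hcomm]; abel

private lemma fsub_mul_join : (f - e * f) * (e + f - e * f) = f - e * f := by
  calc (f - e * f) * (e + f - e * f)
      = f * e + f * f - f * (e * f) - ((e * f) * e + (e * f) * f - (e * f) * (e * f)) := by
        noncomm_ring
    _ = e * f + f - e * f - (e * f + e * f - e * f) := by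
        rw [← hcomm, hf, f_mul_ef he hf hcomm, ef_mul_e he hf hcomm, ef_mul_f he hf hcomm,
          idem_mul he hf hcomm]
    _ = f - e * f := by abel

private lemma join_mul_fsub : (e + f - e * f) * (f - e * f) = f - e * f := by
  calc (e + f - e * f) * (f - e * f)
      = e * f + f * f - (e * f) * f - (e * (e * f) + f * (e * f) - (e * f) * (e * f)) := by
        noncomm_ring
    _ = e * f + f - e * f - (e * f + e * f - e * f) := by
        rw [hf, ef_mul_f he hf hcomm, e_mul_ef he hf hcomm, f_mul_ef he hf hcomm,
          idem_mul he hf hcomm]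
    _ = f - e * f := by abel

end Algebra

private lemma ks_pair_s17 (hc : IsKSColoring c) {a b : R} (ha : a * a = a) (hb : b * b = b)
    (hab : a * b = 0) (hba : b * a = 0) :
    ¬(c ⟨a, ha⟩ = true ∧ c ⟨b, hb⟩ = true) := by
  rintro ⟨h1, h2⟩
  have horth : ∀ i j : Fin 2, i ≠ j →
      ((![(⟨a, ha⟩ : {e : R // e * e = e}), ⟨b, hb⟩] i : R) *
        (![(⟨a, ha⟩ : {e : R // e * e = e}), ⟨b, hb⟩] j : R) = 0) := by
    intro i j hij
    fin_cases i <;> fin_cases j <;> simp_all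
  have := (hc 2 ![⟨a, ha⟩, ⟨b, hb⟩] horth).1 0 1 (by simpa using h1) (by simpa using h2)
  simp at this

private lemma ks_pair_sum (hc : IsKSColoring c) {a b : R} (ha : a * a = a) (hb : b * b = b)
    (hab : a * b = 0) (hba : b * a = 0) (hsum : a + b = 1) :
    c ⟨a, ha⟩ = true ∨ c ⟨b, hb⟩ = true := by
  have horth : ∀ i j : Fin 2, i ≠ j →
      ((![(⟨a, ha⟩ : {e : R // e * e = e}), ⟨b, hb⟩] i : R) *
        (![(⟨a, ha⟩ : {e : R // e * e = e}), ⟨b, hb⟩] j : R) = 0) := by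
    intro i j hij
    fin_cases i <;> fin_cases j <;> simp_all
  obtain ⟨i, hi, -⟩ := (hc 2 ![⟨a, ha⟩, ⟨b, hb⟩] horth).2
    (by simp [Fin.sum_univ_two, hsum])
  fin_cases i
  · left; simpa using hi
  · right; simpa using hi

private lemma ks_triple_sum (hc : IsKSColoring c) {a b d : R}
    (ha : a * a = a) (hb : b * b = b) (hd : d * d = d)
    (hab : a * b = 0) (hba : b * a = 0) (had : a * d = 0) (hda : d * a = 0)
    (hbd : b * d = 0) (hdb : d * b = 0) (hsum : a + b + d = 1) :
    c ⟨a, ha⟩ = true ∨ c ⟨b, hb⟩ = true ∨ c ⟨d, hd⟩ = true := by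
  have horth : ∀ i j : Fin 3, i ≠ j →
      ((![(⟨a, ha⟩ : {e : R // e * e = e}), ⟨b, hb⟩, ⟨d, hd⟩] i : R) *
        (![(⟨a, ha⟩ : {e : R // e * e = e}), ⟨b, hb⟩, ⟨d, hd⟩] j : R) = 0) := by
    intro i j hij
    fin_cases i <;> fin_cases j <;> simp_all
  obtain ⟨i, hi, -⟩ := (hc 3 ![⟨a, ha⟩, ⟨b, hb⟩, ⟨d, hd⟩] horth).2
    (by simp [Fin.sum_univ_three, hsum])
  fin_cases i
  · left; simpa using hi
  · right; left; simpa using hi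
  · right; right; simpa using hi

private lemma ks_zero (hc : IsKSColoring c) (h : (0 : R) * 0 = 0) : c ⟨0, h⟩ = false := by
  have := ks_pair_s17 hc h h (by simp) (by simp)
  cases hcc : c ⟨0, h⟩ with
  | false => rfl
  | true => exact absurd ⟨hcc, hcc⟩ this

private lemma ks_compl_true (hc : IsKSColoring c) {a : R} (ha : a * a = a)
    (hfa : c ⟨a, ha⟩ = false) : c ⟨1 - a, idem_compl ha⟩ = true := by
  rcases ks_pair_sum hc ha (idem_compl ha)
      (by rw [mul_sub, mul_one, ha, sub_self])
      (by rw [sub_mul, one_mul, ha, sub_self]) (by abel) with h | h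
  · rw [hfa] at h; exact absurd h (by simp)
  · exact h

private lemma ks_down (hc : IsKSColoring c) {e f : R} (he : e * e = e) (hf : f * f = f)
    (hcomm : e * f = f * e) (hef : e * f = e) (hcf : c ⟨f, hf⟩ = false) :
    c ⟨e, he⟩ = false := by
  have htf : c ⟨1 - f, idem_compl hf⟩ = true := ks_compl_true hc hf hcf
  have := ks_pair_s17 hc he (idem_compl hf)
    (by rw [mul_sub, mul_one, hef, sub_self])
    (by rw [sub_mul, one_mul, ← hcomm, hef, sub_self])
  cases hcc : c ⟨e, he⟩ with
  | false => rfl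
  | true => exact absurd ⟨hcc, htf⟩ this

private lemma ks_join (hc : IsKSColoring c) {e f : R} (he : e * e = e) (hf : f * f = f)
    (hcomm : e * f = f * e) (hce : c ⟨e, he⟩ = false) (hcf : c ⟨f, hf⟩ = false) :
    c ⟨e + f - e * f, idem_join he hf hcomm⟩ = false := by
  set g := e + f - e * f with hg
  have hgidem : g * g = g := idem_join he hf hcomm
  have hcfsub : c ⟨f - e * f, idem_fsub he hf hcomm⟩ = false := by
    refine ks_down hc (idem_fsub he hf hcomm) hf ?_ ?_ hcf
    · rw [sub_mul, ef_mul_f he hf hcomm, mul_sub, hf, f_mul_ef he hf hcomm]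
    · rw [sub_mul, ef_mul_f he hf hcomm, hf]
  have htriple := ks_triple_sum hc he (idem_fsub he hf hcomm) (idem_compl hgidem)
    (orth_e_fsub he hf hcomm) (orth_fsub_e he hf hcomm)
    (by rw [mul_sub, mul_one, e_mul_join he hf hcomm, sub_self])
    (by rw [sub_mul, one_mul, join_mul_e he hf hcomm, sub_self])
    (by rw [mul_sub, mul_one, fsub_mul_join he hf hcomm, sub_self])
    (by rw [sub_mul, one_mul, join_mul_fsub he hf hcomm, sub_self])
    (by rw [hg]; abel)
  have htg : c ⟨1 - g, idem_compl hgidem⟩ = true := by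
    rcases htriple with h | h | h
    · rw [hce] at h; exact absurd h (by simp)
    · rw [hcfsub] at h; exact absurd h (by simp)
    · exact h
  have := ks_pair_s17 hc hgidem (idem_compl hgidem)
    (by rw [mul_sub, mul_one, hgidem, sub_self])
    (by rw [sub_mul, one_mul, hgidem, sub_self])
  cases hcc : c ⟨g, hgidem⟩ with
  | false => rfl
  | true => exact absurd ⟨hcc, htg⟩ this

private lemma ks_one (hc : IsKSColoring c) (h : (1 : R) * 1 = 1) : c ⟨1, h⟩ = true := by
  rcases ks_pair_sum hc h (mul_zero (0 : R)) (mul_zero 1) (zero_mul 1) (add_zero 1)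
    with hh | hh
  · exact hh
  · rw [ks_zero hc (mul_zero 0)] at hh; exact absurd hh (by simp)

end KSAux

/-- A coloring `c` of the idempotents of a ring `R` is a Kochen–Specker coloring if and
only if the set `B` of black idempotents contains `0`, is downward closed (for the order
`e ≤ f` iff `e * f = e` on commuting idempotents), is closed under joins
`e + f - e * f` of commuting black idempotents, does not contain `1`, and is prime: if a
product of commuting idempotents is black, then one of the factors is black. -/
theorem isKSColoring_iff_blackSet_prime {R : Type*} [Ring R]
    (c : {e : R // e * e = e} → Bool) :
    IsKSColoring c ↔
      ((0 : R) ∈ blackSet c ∧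
       (∀ e f : R, e * e = e → f * f = f → e * f = f * e → e * f = e →
          f ∈ blackSet c → e ∈ blackSet c) ∧
       (∀ e f : R, e * e = e → f * f = f → e * f = f * e →
          e ∈ blackSet c → f ∈ blackSet c → e + f - e * f ∈ blackSet c) ∧
       ((1 : R) ∉ blackSet c ∧
        ∀ e f : R, e * e = e → f * f = f → e * f = f * e →
          e * f ∈ blackSet c → e ∈ blackSet c ∨ f ∈ blackSet c)) := by
  constructor
  · intro hc
    refine ⟨⟨mul_zero 0, ks_zero hc _⟩, ?_, ?_, ?_, ?_⟩
    · rintro e f he hf hcomm hef ⟨hf', hcf⟩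
      exact ⟨he, ks_down hc he hf' hcomm hef hcf⟩
    · rintro e f he hf hcomm ⟨he', hce⟩ ⟨hf', hcf⟩
      exact ⟨idem_join he' hf' hcomm, ks_join hc he' hf' hcomm hce hcf⟩
    · rintro ⟨h1, hc1⟩
      rw [ks_one hc h1] at hc1
      exact absurd hc1 (by simp)
    · rintro e f he hf hcomm ⟨hef, hcef⟩
      by_contra hcon
      push_neg at hcon
      obtain ⟨hnee, hnef⟩ := hcon
      have hcetrue : c ⟨e, he⟩ = true := by
        cases hcc : c ⟨e, he⟩ with
        | false => exact absurd ⟨he, hcc⟩ hnee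
        | true => rfl
      have hcftrue : c ⟨f, hf⟩ = true := by
        cases hcc : c ⟨f, hf⟩ with
        | false => exact absurd ⟨hf, hcc⟩ hnef
        | true => rfl
      -- e - e*f is idempotent and orthogonal to f
      have hesub : e - e * f = e - f * e := by rw [hcomm]
      have hesubidem : (e - e * f) * (e - e * f) = e - e * f := by
        rw [hesub]; exact idem_fsub hf he hcomm.symm
      have horth1 : (e - e * f) * f = 0 := by
        rw [hesub]; exact orth_fsub_e hf he hcomm.symm
      have horth2 : f * (e - e * f) = 0 := by
        rw [hesub]; exact orth_e_fsub hf he hcomm.symm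
      have hcesub : c ⟨e - e * f, hesubidem⟩ = false := by
        have := ks_pair_s17 hc hesubidem hf horth1 horth2
        cases hcc : c ⟨e - e * f, hesubidem⟩ with
        | false => rfl
        | true => exact absurd ⟨hcc, hcftrue⟩ this
      -- join of e - e*f and e*f is e, contradiction
      have horth3 : (e - e * f) * (e * f) = 0 := by
        rw [sub_mul, e_mul_ef he hf hcomm, idem_mul he hf hcomm, sub_self]
      have horth4 : (e * f) * (e - e * f) = 0 := by
        rw [mul_sub, ef_mul_e he hf hcomm, idem_mul he hf hcomm, sub_self]
      have hjoin := ks_join hc hesubidem hef (by rw [horth3, horth4]) hcesub hcef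
      have hkey : (e - e * f) + e * f - (e - e * f) * (e * f) = e := by
        rw [horth3, sub_zero]; abel
      have : c ⟨e, he⟩ = false := by
        have heq : (⟨(e - e * f) + e * f - (e - e * f) * (e * f),
            idem_join hesubidem hef (by rw [horth3, horth4])⟩ :
            {x : R // x * x = x}) = ⟨e, he⟩ := Subtype.ext hkey
        rw [← heq]; exact hjoin
      rw [this] at hcetrue
      exact absurd hcetrue (by simp)
  · rintro ⟨hB0, hdown, hjoin, hB1, hprime⟩
    intro k e horth
    have hfb : ∀ i : Fin k, (e i : R) ∈ blackSet c → c (e i) = false := by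
      rintro i ⟨h, hcc⟩
      rwa [Subtype.coe_eta] at hcc
    have huniq : ∀ i j : Fin k, c (e i) = true → c (e j) = true → i = j := by
      intro i j hti htj
      by_contra hij
      have h0 : (e i : R) * (e j : R) = 0 := horth i j hij
      have hmem : (e i : R) * (e j : R) ∈ blackSet c := by rw [h0]; exact hB0
      rcases hprime _ _ (e i).2 (e j).2 (by rw [h0, horth j i (Ne.symm hij)]) hmem
        with h | h
      · rw [hfb i h] at hti; exact absurd hti (by simp)
      · rw [hfb j h] at htj; exact absurd htj (by simp)
    refine ⟨huniq, fun hsum => ?_⟩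
    by_cases hex : ∃ i, c (e i) = true
    · obtain ⟨i, hi⟩ := hex
      exact ⟨i, hi, fun j hj => huniq j i hj hi⟩
    · push_neg at hex
      have hall : ∀ i, c (e i) = false := by
        intro i
        cases h : c (e i) with
        | false => rfl
        | true => exact absurd h (hex i)
      have key : ∀ S : Finset (Fin k), (∑ i ∈ S, (e i : R)) ∈ blackSet c := by
        intro S
        induction S using Finset.induction_on with
        | empty => rw [Finset.sum_empty]; exact hB0
        | @insert a S haS ih =>
          obtain ⟨hs, hcs⟩ := ih
          have hsea : (∑ i ∈ S, (e i : R)) * (e a : R) = 0 := by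
            rw [Finset.sum_mul]
            exact Finset.sum_eq_zero fun i hi => horth i a (by rintro rfl; exact haS hi)
          have heas : (e a : R) * ∑ i ∈ S, (e i : R) = 0 := by
            rw [Finset.mul_sum]
            exact Finset.sum_eq_zero fun i hi => horth a i (by rintro rfl; exact haS hi)
          have hea : (e a : R) ∈ blackSet c := ⟨(e a).2, by
            rw [Subtype.coe_eta]; exact hall a⟩
          have := hjoin _ _ hs (e a).2 (by rw [hsea, heas]) ⟨hs, hcs⟩ hea
          rw [hsea, sub_zero] at this
          rw [Finset.sum_insert haS]
          rwa [add_comm] at this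
      have h1mem := key Finset.univ
      rw [hsum] at h1mem
      exact absurd h1mem hB1
end

section
/- Let R be a ring. If there is no Kochen–Specker coloring of the idempotents of R, then R has no prime partial ideal. -/
/-- If there is no Kochen–Specker coloring of the idempotents of a ring `R`, then `R` has
no prime partial ideal. -/
theorem no_prime_partial_ideal_of_no_KS_coloring (R : Type*) [Ring R]
    (h : ¬ ∃ c : {e : R // e * e = e} → Bool, IsKSColoring c) :
    ¬ ∃ p : Set R, IsPrimePartialIdeal p := by
  rintro ⟨p, hp⟩
  apply h
  classical
  refine ⟨fun e => decide ((e : R) ∉ p), ?_⟩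
  intro k e horth
  set S : Set R := Set.range (fun i => (e i : R)) with hS
  have hcomm : ∀ a ∈ S, ∀ b ∈ S, a * b = b * a := by
    rintro a ⟨i, rfl⟩ b ⟨j, rfl⟩
    by_cases hij : i = j
    · subst hij; rfl
    · simp only
      rw [horth i j hij, horth j i (Ne.symm hij)]
  letI : CommRing (Subring.closure S) := Subring.closureCommRingOfComm hcomm
  obtain ⟨I, hI, hIp⟩ := hp (Subring.closure S) (fun x y => mul_comm x y)
  have hmem : ∀ i, (e i : R) ∈ Subring.closure S :=
    fun i => Subring.subset_closure ⟨i, rfl⟩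
  set a : Fin k → Subring.closure S := fun i => ⟨e i, hmem i⟩ with ha
  have key : ∀ i j : Fin k, i ≠ j → a i ∈ I ∨ a j ∈ I := by
    intro i j hij
    apply hI.mem_or_mem
    have h0 : a i * a j = 0 := by
      ext
      simpa using horth i j hij
    rw [h0]; exact I.zero_mem
  constructor
  · intro i j hi hj
    by_contra hij
    simp only [decide_eq_true_eq] at hi hj
    rcases key i j hij with h' | h'
    · exact hi ((hIp _).mp h')
    · exact hj ((hIp _).mp h')
  · intro hsum
    have hone : (∑ i, a i) = 1 := by
      ext
      push_cast
      simpa using hsum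
    have hex : ∃ i, a i ∉ I := by
      by_contra hall
      push_neg at hall
      have h1 : (1 : Subring.closure S) ∈ I := hone ▸ Ideal.sum_mem I (fun i _ => hall i)
      exact hI.ne_top (I.eq_top_iff_one.mpr h1)
    obtain ⟨i, hi⟩ := hex
    refine ⟨i, ?_, ?_⟩
    · simp only [decide_eq_true_eq]
      exact fun hmem' => hi ((hIp _).mpr hmem')
    · intro j hj
      by_contra hij
      simp only [decide_eq_true_eq] at hj
      rcases key j i hij with h' | h'
      · exact hj ((hIp _).mp h')
      · exact hi h'
end
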